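/- Let G be a finite simple graph with no isolated vertex and let D ⊆ V. Then D is the unique minimum paired-dominating set of G if and only if every minimum ev-dominating set M of G satisfies V_G(M) = D. -/

import Mathlib

open SimpleGraph

variable {V : Type*}

/-- `D` is a dominating set of `G`: every vertex outside `D` has a neighbor in `D`. -/
def IsDomSet (G : SimpleGraph V) (D : Set V) : Prop :=
  ∀ v ∉ D, ∃ u ∈ D, G.Adj u v

/-- The edge `e` ev-dominates the vertex `v`: `e` is incident to `v` or to a neighbor of `v`. -/
def EvDom (G : SimpleGraph V) (e : Sym2 V) (v : V) : Prop :=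
  v ∈ e ∨ ∃ u ∈ e, G.Adj u v

/-- `M` is an edge-vertex dominating set of `G`. -/
def IsEvDomSet (G : SimpleGraph V) (M : Set (Sym2 V)) : Prop :=
  M ⊆ G.edgeSet ∧ ∀ v : V, ∃ e ∈ M, EvDom G e v

/-- `M` is a minimum edge-vertex dominating set of `G`. -/
def IsMinEvDomSet (G : SimpleGraph V) (M : Set (Sym2 V)) : Prop :=
  IsEvDomSet G M ∧ ∀ M' : Set (Sym2 V), IsEvDomSet G M' → M.ncard ≤ M'.ncard

/-- The edge-vertex domination number `γ_ev(G)`. -/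
noncomputable def evNum (G : SimpleGraph V) : ℕ :=
  sInf {n | ∃ M : Set (Sym2 V), IsEvDomSet G M ∧ M.ncard = n}

/-- The set of all endpoints of edges in `M`. -/
def edgeVerts (M : Set (Sym2 V)) : Set V := {v | ∃ e ∈ M, v ∈ e}

/-- `M` is a perfect matching of the induced subgraph `G[D]`: a set of edges of `G`
with all endpoints in `D`, such that every vertex of `D` lies in exactly one edge of `M`. -/
def IsPMOn (G : SimpleGraph V) (D : Set V) (M : Set (Sym2 V)) : Prop :=
  M ⊆ G.edgeSet ∧ (∀ e ∈ M, ∀ v ∈ e, v ∈ D) ∧ ∀ v ∈ D, ∃! e, e ∈ M ∧ v ∈ e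

/-- `D` is a paired-dominating set of `G`. -/
def IsPairedDomSet (G : SimpleGraph V) (D : Set V) : Prop :=
  IsDomSet G D ∧ ∃ M : Set (Sym2 V), IsPMOn G D M

/-- `D` is a minimum paired-dominating set of `G`. -/
def IsMinPairedDomSet (G : SimpleGraph V) (D : Set V) : Prop :=
  IsPairedDomSet G D ∧ ∀ D' : Set V, IsPairedDomSet G D' → D.ncard ≤ D'.ncard

/-- The paired-domination number `γ_pr(G)`. -/
noncomputable def prNum (G : SimpleGraph V) : ℕ :=
  sInf {n | ∃ D : Set V, IsPairedDomSet G D ∧ D.ncard = n}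

/-- No two distinct edges of `M` share a vertex. -/
def NoSharedVertex (M : Set (Sym2 V)) : Prop :=
  ∀ e ∈ M, ∀ f ∈ M, e ≠ f → ∀ v : V, v ∈ e → v ∉ f

/-- `G` has no isolated vertex. -/
def NoIsolated (G : SimpleGraph V) : Prop := ∀ v : V, ∃ u, G.Adj u v

/-! If two edges `va`, `vb` of a minimum ev-dominating set `M` share the vertex `v`, minimality
forces a neighbour `w` of `b` outside `V_G(M)`, and exchanging `vb` for `bw` gives a minimum
ev-dominating set with vertex set `V_G(M) ∪ {w}`. So a minimum ev-dominating set with `|V_G(M)|`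
maximal is a matching. Conversely a perfect matching of a paired-dominating set is ev-dominating,
hence `γ_pr = 2 γ_ev`, and the minimum paired-dominating sets are exactly the vertex sets of the
minimum ev-dominating matchings; this gives the backward direction.

For the forward direction take a minimum ev-dominating `M` with a shared vertex and `|V_G(M)|`
maximal among those. Every exchange at `b` then yields a matching, hence `V_G(M) ∪ {w} = D`, so the
only neighbour of `b` outside `V_G(M)` is the one found for `a`. Therefore `V_G(M \ {vb})` still
dominates, and it is a paired-dominating set properly contained in `D`. -/

section
variable {G : SimpleGraph V} {M N P : Set (Sym2 V)} {D : Set V} {e f : Sym2 V} {v a b w x : V}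

lemma evDom_or_adj_of_evDom_mk (hve : v ∈ e) (hvb : G.Adj v b) (h : EvDom G s(v, b) x) :
    EvDom G e x ∨ G.Adj b x := by
  rcases h with hx | ⟨u, hu, hux⟩
  · rcases Sym2.mem_iff.1 hx with rfl | rfl
    · exact Or.inl (Or.inl hve)
    · exact Or.inl (Or.inr ⟨v, hve, hvb⟩)
  · rcases Sym2.mem_iff.1 hu with rfl | rfl
    · exact Or.inl (Or.inr ⟨u, hve, hux⟩)
    · exact Or.inr hux

lemma EvDom.exists_adj_of_notMem_edgeVerts (h : EvDom G e x) (he : e ∈ M)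
    (hx : x ∉ edgeVerts M) : ∃ u ∈ edgeVerts M, G.Adj u x := by
  rcases h with hxe | ⟨u, hue, hux⟩
  · exact absurd ⟨e, he, hxe⟩ hx
  · exact ⟨u, ⟨e, he, hue⟩, hux⟩

lemma IsEvDomSet.isDomSet_edgeVerts (hM : IsEvDomSet G M) : IsDomSet G (edgeVerts M) := by
  intro x hx
  obtain ⟨e, he, hex⟩ := hM.2 x
  exact hex.exists_adj_of_notMem_edgeVerts he hx

lemma IsEvDomSet.of_replace (hM : IsEvDomSet G M) (hN : N ⊆ G.edgeSet)
    (h : ∀ f ∈ M, f ∉ N → ∀ x, EvDom G f x → ∃ e ∈ N, EvDom G e x) : IsEvDomSet G N := by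
  refine ⟨hN, fun x => ?_⟩
  obtain ⟨f, hf, hfx⟩ := hM.2 x
  by_cases hfN : f ∈ N
  · exact ⟨f, hfN, hfx⟩
  · exact h f hf hfN x hfx

lemma edgeVerts_insert_mk (M : Set (Sym2 V)) (u v : V) :
    edgeVerts (insert s(u, v) M) = insert u (insert v (edgeVerts M)) := by
  ext x
  simp only [edgeVerts, Set.mem_insert_iff, Set.mem_ofPred_eq, exists_eq_or_imp, Sym2.mem_iff,
    or_assoc]

lemma edgeVerts_mono (h : M ⊆ N) : edgeVerts M ⊆ edgeVerts N :=
  fun _ ⟨e, he, hxe⟩ => ⟨e, h he, hxe⟩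

lemma NoSharedVertex.mono (h : M ⊆ N) (hN : NoSharedVertex N) : NoSharedVertex M :=
  fun e he f hf hef => hN e (h he) f (h hf) hef

lemma exists_mk_mem_of_not_noSharedVertex (h : ¬ NoSharedVertex M) :
    ∃ v a b, a ≠ b ∧ s(v, a) ∈ M ∧ s(v, b) ∈ M := by
  simp only [NoSharedVertex, not_forall, not_not] at h
  obtain ⟨e, he, f, hf, hef, v, hve, hvf⟩ := h
  rw [← Sym2.other_spec hve] at he hef
  rw [← Sym2.other_spec hvf] at hf hef
  exact ⟨v, _, _, fun hab => hef (by rw [hab]), he, hf⟩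

lemma IsPMOn.noSharedVertex (hP : IsPMOn G D P) : NoSharedVertex P := by
  intro e he f hf hef x hxe hxf
  obtain ⟨g, _, hg⟩ := hP.2.2 x (hP.2.1 e he x hxe)
  exact hef ((hg e ⟨he, hxe⟩).trans (hg f ⟨hf, hxf⟩).symm)

lemma IsPMOn.edgeVerts_eq (hP : IsPMOn G D P) : edgeVerts P = D := by
  ext x
  constructor
  · rintro ⟨e, he, hxe⟩
    exact hP.2.1 e he x hxe
  · intro hx
    obtain ⟨e, ⟨he, hxe⟩, -⟩ := hP.2.2 x hx
    exact ⟨e, he, hxe⟩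

lemma IsPMOn.isEvDomSet (hP : IsPMOn G D P) (hD : IsDomSet G D) : IsEvDomSet G P := by
  refine ⟨hP.1, fun x => ?_⟩
  by_cases hx : x ∈ D
  · obtain ⟨e, ⟨he, hxe⟩, -⟩ := hP.2.2 x hx
    exact ⟨e, he, Or.inl hxe⟩
  · obtain ⟨u, hu, hux⟩ := hD x hx
    obtain ⟨e, ⟨he, hue⟩, -⟩ := hP.2.2 u hu
    exact ⟨e, he, Or.inr ⟨u, hue, hux⟩⟩

lemma isPMOn_edgeVerts (hM : M ⊆ G.edgeSet) (hm : NoSharedVertex M) :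
    IsPMOn G (edgeVerts M) M := by
  refine ⟨hM, fun e he x hx => ⟨e, he, hx⟩, ?_⟩
  rintro x ⟨e, he, hxe⟩
  refine ⟨e, ⟨he, hxe⟩, ?_⟩
  rintro f ⟨hf, hxf⟩
  by_contra hfe
  exact hm f hf e he hfe x hxf hxe

lemma IsMinEvDomSet.of_ncard_le (hM : IsMinEvDomSet G M) (hN : IsEvDomSet G N)
    (h : N.ncard ≤ M.ncard) : IsMinEvDomSet G N :=
  ⟨hN, fun M' hM' => h.trans (hM.2 M' hM')⟩

lemma isEvDomSet_edgeSet (hG : NoIsolated G) : IsEvDomSet G G.edgeSet := by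
  refine ⟨subset_rfl, fun v => ?_⟩
  obtain ⟨u, huv⟩ := hG v
  exact ⟨s(u, v), huv, Or.inl (Sym2.mem_mk_right u v)⟩

lemma IsEvDomSet.isPairedDomSet_edgeVerts (hM : IsEvDomSet G M) (hm : NoSharedVertex M) :
    IsPairedDomSet G (edgeVerts M) :=
  ⟨hM.isDomSet_edgeVerts, M, isPMOn_edgeVerts hM.1 hm⟩

lemma edgeVerts_exchange (hva : s(v, a) ∈ M) (hvb : s(v, b) ∈ M) (hab : a ≠ b) :
    edgeVerts (insert s(b, w) (M \ {s(v, b)})) = insert w (edgeVerts M) := by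
  have hv : v ∈ edgeVerts (M \ {s(v, b)}) := ⟨_, ⟨hva, mt Sym2.congr_right.1 hab⟩, Sym2.mem_mk_left _ _⟩
  conv_rhs => rw [← Set.insert_sdiff_self_of_mem hvb]
  rw [edgeVerts_insert_mk, edgeVerts_insert_mk, Set.insert_eq_of_mem (Set.mem_insert_of_mem _ hv),
    Set.insert_comm]

lemma IsEvDomSet.exchange (hM : IsEvDomSet G M) (hva : s(v, a) ∈ M) (hvb : s(v, b) ∈ M)
    (hab : a ≠ b) (hbw : G.Adj b w) : IsEvDomSet G (insert s(b, w) (M \ {s(v, b)})) := by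
  refine hM.of_replace (Set.insert_subset hbw fun g hg => hM.1 hg.1) fun f hf hfN x hfx => ?_
  obtain rfl : f = s(v, b) := of_not_not fun h => hfN (Or.inr ⟨hf, h⟩)
  rcases evDom_or_adj_of_evDom_mk (Sym2.mem_mk_left v a) (hM.1 hvb) hfx with hx | hbx
  · exact ⟨_, Or.inr ⟨hva, mt Sym2.congr_right.1 hab⟩, hx⟩
  · exact ⟨s(b, w), Or.inl rfl, Or.inr ⟨b, Sym2.mem_mk_left _ _, hbx⟩⟩

lemma isDomSet_edgeVerts_sdiff (hM : IsEvDomSet G M) (hva : s(v, a) ∈ M) (hvb : s(v, b) ∈ M)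
    (hab : a ≠ b) (h : ∀ x ∉ edgeVerts M, G.Adj b x → G.Adj a x) :
    IsDomSet G (edgeVerts (M \ {s(v, b)})) := by
  intro x hx
  have hvaN : s(v, a) ∈ M \ {s(v, b)} := ⟨hva, mt Sym2.congr_right.1 hab⟩
  obtain ⟨f, hf, hfx⟩ := hM.2 x
  by_cases hfN : f ∈ M \ {s(v, b)}
  · exact hfx.exists_adj_of_notMem_edgeVerts hfN hx
  obtain rfl : f = s(v, b) := of_not_not fun h => hfN ⟨hf, h⟩
  rcases evDom_or_adj_of_evDom_mk (Sym2.mem_mk_left v a) (hM.1 hvb) hfx with hvx | hbx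
  · exact hvx.exists_adj_of_notMem_edgeVerts hvaN hx
  by_cases hxM : x ∈ edgeVerts M
  · exfalso
    obtain ⟨g, hg, hxg⟩ := hxM
    by_cases hgN : g ∈ M \ {s(v, b)}
    · exact hx ⟨g, hgN, hxg⟩
    obtain rfl : g = s(v, b) := of_not_not fun h => hgN ⟨hg, h⟩
    rcases Sym2.mem_iff.1 hxg with rfl | rfl
    · exact hx ⟨_, hvaN, Sym2.mem_mk_left _ _⟩
    · exact G.irrefl hbx
  · exact ⟨a, ⟨_, hvaN, Sym2.mem_mk_right _ _⟩, h x hxM hbx⟩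

end

section Finite
variable [Finite V] {G : SimpleGraph V} {M N P : Set (Sym2 V)} {D : Set V} {v a b w : V}

lemma ncard_edgeVerts (hM : M ⊆ G.edgeSet) (hm : NoSharedVertex M) :
    (edgeVerts M).ncard = 2 * M.ncard := by
  classical
  set s := (Set.toFinite M).toFinset
  have hs : edgeVerts M = ↑(s.biUnion Sym2.toFinset) := by
    ext x
    simp [s, edgeVerts, Sym2.mem_toFinset]
  have hdisj : (s : Set (Sym2 V)).PairwiseDisjoint Sym2.toFinset := by
    intro e he f hf hef
    simp only [Set.Finite.coe_toFinset, s] at he hf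
    exact Finset.disjoint_left.2 fun x hxe hxf =>
      hm e he f hf hef x (Sym2.mem_toFinset.1 hxe) (Sym2.mem_toFinset.1 hxf)
  rw [hs, Set.ncard_coe_finset, Finset.card_biUnion hdisj, Set.ncard_eq_toFinset_card M,
    Finset.sum_congr rfl fun e he => Sym2.card_toFinset_of_not_isDiag e
      (G.not_isDiag_of_mem_edgeSet (hM ((Set.toFinite M).mem_toFinset.1 he))),
    Finset.sum_const, smul_eq_mul, mul_comm]

lemma IsPMOn.ncard_eq (hP : IsPMOn G D P) : D.ncard = 2 * P.ncard := by
  rw [← hP.edgeVerts_eq, ncard_edgeVerts hP.1 hP.noSharedVertex]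

lemma IsMinEvDomSet.isMinPairedDomSet_edgeVerts (hM : IsMinEvDomSet G M)
    (hm : NoSharedVertex M) : IsMinPairedDomSet G (edgeVerts M) := by
  refine ⟨hM.1.isPairedDomSet_edgeVerts hm, ?_⟩
  rintro D ⟨hD, P, hP⟩
  rw [ncard_edgeVerts hM.1.1 hm, hP.ncard_eq]
  exact Nat.mul_le_mul_left 2 (hM.2 P (hP.isEvDomSet hD))

lemma IsMinPairedDomSet.isMinEvDomSet_of_isPMOn (hD : IsMinPairedDomSet G D)
    (hP : IsPMOn G D P) (hM : IsMinEvDomSet G M) (hm : NoSharedVertex M) :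
    IsMinEvDomSet G P := by
  refine hM.of_ncard_le (hP.isEvDomSet hD.1.1) ?_
  have := hD.2 _ (hM.1.isPairedDomSet_edgeVerts hm)
  rw [hP.ncard_eq, ncard_edgeVerts hM.1.1 hm] at this
  omega

lemma IsMinEvDomSet.exists_adj_notMem_edgeVerts (hM : IsMinEvDomSet G M) (hva : s(v, a) ∈ M)
    (hvb : s(v, b) ∈ M) (hab : a ≠ b) : ∃ w, G.Adj b w ∧ w ∉ edgeVerts M := by
  by_contra! h
  have hvaN : s(v, a) ∈ M \ {s(v, b)} := ⟨hva, mt Sym2.congr_right.1 hab⟩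
  have hN : IsEvDomSet G (M \ {s(v, b)}) := by
    refine hM.1.of_replace (fun g hg => hM.1.1 hg.1) fun f hf hfN x hfx => ?_
    obtain rfl : f = s(v, b) := of_not_not fun h => hfN ⟨hf, h⟩
    rcases evDom_or_adj_of_evDom_mk (Sym2.mem_mk_left v a) (hM.1.1 hvb) hfx with hx | hbx
    · exact ⟨_, hvaN, hx⟩
    obtain ⟨g, hg, hxg⟩ := h x hbx
    by_cases hgN : g ∈ M \ {s(v, b)}
    · exact ⟨g, hgN, Or.inl hxg⟩
    obtain rfl : g = s(v, b) := of_not_not fun h => hgN ⟨hg, h⟩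
    rcases Sym2.mem_iff.1 hxg with rfl | rfl
    · exact ⟨_, hvaN, Or.inl (Sym2.mem_mk_left _ _)⟩
    · exact absurd hbx G.irrefl
  have := hM.2 _ hN
  have := Set.ncard_sdiff_singleton_add_one hvb
  omega

lemma ncard_exchange (hvb : s(v, b) ∈ M) (hw : w ∉ edgeVerts M) :
    (insert s(b, w) (M \ {s(v, b)})).ncard = M.ncard := by
  rw [Set.ncard_insert_of_notMem fun h => hw ⟨_, h.1, Sym2.mem_mk_right _ _⟩,
    Set.ncard_sdiff_singleton_add_one hvb]

lemma IsMinEvDomSet.exchange (hM : IsMinEvDomSet G M) (hva : s(v, a) ∈ M) (hvb : s(v, b) ∈ M)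
    (hab : a ≠ b) (hbw : G.Adj b w) (hw : w ∉ edgeVerts M) :
    IsMinEvDomSet G (insert s(b, w) (M \ {s(v, b)})) :=
  hM.of_ncard_le (hM.1.exchange hva hvb hab hbw) (ncard_exchange hvb hw).le

lemma ncard_edgeVerts_exchange (hva : s(v, a) ∈ M) (hvb : s(v, b) ∈ M) (hab : a ≠ b)
    (hw : w ∉ edgeVerts M) :
    (edgeVerts (insert s(b, w) (M \ {s(v, b)}))).ncard = (edgeVerts M).ncard + 1 := by
  rw [edgeVerts_exchange hva hvb hab, Set.ncard_insert_of_notMem hw]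


lemma IsEvDomSet.exists_isMinEvDomSet (hM : IsEvDomSet G M) : ∃ N, IsMinEvDomSet G N := by
  obtain ⟨N, hN, hmin⟩ := Set.exists_min_image {N | IsEvDomSet G N} Set.ncard (Set.toFinite _)
    ⟨M, hM⟩
  exact ⟨N, hN, hmin⟩

lemma exists_isMinEvDomSet_noSharedVertex (hG : NoIsolated G) :
    ∃ M, IsMinEvDomSet G M ∧ NoSharedVertex M := by
  obtain ⟨M₀, hM₀⟩ := (isEvDomSet_edgeSet hG).exists_isMinEvDomSet
  obtain ⟨M, hM, hmax⟩ := Set.exists_max_image {M | IsMinEvDomSet G M}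
    (fun M => (edgeVerts M).ncard) (Set.toFinite _) ⟨M₀, hM₀⟩
  refine ⟨M, hM, by_contra fun hm => ?_⟩
  obtain ⟨v, a, b, hab, hva, hvb⟩ := exists_mk_mem_of_not_noSharedVertex hm
  obtain ⟨w, hbw, hw⟩ := hM.exists_adj_notMem_edgeVerts hva hvb hab
  have := hmax _ (hM.exchange hva hvb hab hbw hw)
  rw [ncard_edgeVerts_exchange hva hvb hab hw] at this
  omega

lemma IsMinPairedDomSet.noSharedVertex_of_unique (hD : IsMinPairedDomSet G D)
    (hu : ∀ D', IsMinPairedDomSet G D' → D' = D) (hM : IsMinEvDomSet G M) :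
    NoSharedVertex M := by
  by_contra hm
  obtain ⟨M, ⟨hM, hm⟩, hmax⟩ := Set.exists_max_image
    {M | IsMinEvDomSet G M ∧ ¬ NoSharedVertex M} (fun M => (edgeVerts M).ncard)
    (Set.toFinite _) ⟨M, hM, hm⟩
  obtain ⟨v, a, b, hab, hva, hvb⟩ := exists_mk_mem_of_not_noSharedVertex hm
  have hexchange : ∀ {a b w}, s(v, a) ∈ M → s(v, b) ∈ M → a ≠ b → G.Adj b w →
      w ∉ edgeVerts M →
      NoSharedVertex (insert s(b, w) (M \ {s(v, b)})) ∧ insert w (edgeVerts M) = D := by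
    intro a b w hva hvb hab hbw hw
    have hM' := hM.exchange hva hvb hab hbw hw
    have hm' : NoSharedVertex (insert s(b, w) (M \ {s(v, b)})) := by_contra fun hm' => by
      have := hmax _ ⟨hM', hm'⟩
      rw [ncard_edgeVerts_exchange hva hvb hab hw] at this
      omega
    exact ⟨hm', edgeVerts_exchange hva hvb hab ▸ hu _ (hM'.isMinPairedDomSet_edgeVerts hm')⟩
  obtain ⟨w, hbw, hw⟩ := hM.exists_adj_notMem_edgeVerts hva hvb hab
  obtain ⟨hm', hwD⟩ := hexchange hva hvb hab hbw hw
  obtain ⟨w', haw', hw'⟩ := hM.exists_adj_notMem_edgeVerts hvb hva hab.symm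
  have hadj_a_of_adj_b : ∀ x ∉ edgeVerts M, G.Adj b x → G.Adj a x := by
    intro x hx hbx
    have hxD : x ∈ insert w' (edgeVerts M) := by
      rw [(hexchange hvb hva hab.symm haw' hw').2, ← (hexchange hva hvb hab hbx hx).2]
      exact Set.mem_insert x _
    rwa [hxD.resolve_right hx]
  have hpaired : IsPairedDomSet G (edgeVerts (M \ {s(v, b)})) :=
    ⟨isDomSet_edgeVerts_sdiff hM.1 hva hvb hab hadj_a_of_adj_b, _,
      isPMOn_edgeVerts (fun g hg => hM.1.1 hg.1) (hm'.mono (Set.subset_insert _ _))⟩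
  have hssub : edgeVerts (M \ {s(v, b)}) ⊂ D := by
    rw [← hwD]
    exact (edgeVerts_mono Set.sdiff_subset).trans_ssubset (Set.ssubset_insert hw)
  exact (hD.2 _ hpaired).not_gt (Set.ncard_lt_ncard hssub)

end Finite

theorem stmt8 [Fintype V] (G : SimpleGraph V) (hG : NoIsolated G) (D : Set V) :
    (IsMinPairedDomSet G D ∧ ∀ D' : Set V, IsMinPairedDomSet G D' → D' = D) ↔
      (∀ M : Set (Sym2 V), IsMinEvDomSet G M → edgeVerts M = D) := by
  constructor
  · rintro ⟨hD, hu⟩ M hM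
    exact hu _ (hM.isMinPairedDomSet_edgeVerts (hD.noSharedVertex_of_unique hu hM))
  · intro h
    obtain ⟨M, hM, hm⟩ := exists_isMinEvDomSet_noSharedVertex hG
    have hD : IsMinPairedDomSet G D := h M hM ▸ hM.isMinPairedDomSet_edgeVerts hm
    refine ⟨hD, fun D' hD' => ?_⟩
    obtain ⟨P, hP⟩ := hD'.1.2
    rw [← hP.edgeVerts_eq]
    exact h P (hD'.isMinEvDomSet_of_isPMOn hP hM hm)
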